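/- Let B be a finite type and let ρ, σ : Matrix B B ℂ be positive semidefinite matrices each of trace 1 (density matrices). If F(ρ, σ) = 1, then ρ = σ. (Fidelity equal to one forces the two density matrices to coincide; this is why fidelity exactly 1 characterizes perfect concealment.) -/

import Mathlib

open scoped ComplexOrder
open Matrix
open scoped MatrixOrder

noncomputable section

/-- Partial trace over `A` of the outer product `|ψ⟩⟨ψ|`:
`(ptrA ψ) j q = ∑ i, ψ (i, j) * conj (ψ (i, q))`. -/
def ptrA {A B : Type*} [Fintype A] (ψ : A × B → ℂ) : Matrix B B ℂ :=
  fun j q => ∑ i : A, ψ (i, j) * (starRingEnd ℂ) (ψ (i, q))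

/-- The Kronecker product `S ⊗ I` with the identity on `B`, as a matrix on `A × B`. -/
def kronId {A B : Type*} [DecidableEq B] (S : Matrix A A ℂ) : Matrix (A × B) (A × B) ℂ :=
  Matrix.kroneckerMap (· * ·) S (1 : Matrix B B ℂ)

/-- `ptrA ψ` is a Gram matrix, hence positive semidefinite. -/
lemma ptrA_posSemidef {A B : Type*} [Fintype A] [Fintype B] (ψ : A × B → ℂ) :
    (ptrA ψ).PosSemidef := by
  set V : Matrix A B ℂ := Matrix.of fun i j => (starRingEnd ℂ) (ψ (i, j)) with hV
  have h := Matrix.posSemidef_conjTranspose_mul_self V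
  have heq : ptrA ψ = Vᴴ * V := by
    ext j q
    simp [Matrix.mul_apply, Matrix.conjTranspose_apply, ptrA, hV, mul_comm]
  rw [heq]; exact h

lemma sqrt_mul_mul_sqrt_posSemidef {B : Type*} [Fintype B] [DecidableEq B]
    {ρ σ : Matrix B B ℂ} (hρ : ρ.PosSemidef) (hσ : σ.PosSemidef) :
    (CFC.sqrt ρ * σ * CFC.sqrt ρ).PosSemidef := by
  have h := hσ.mul_mul_conjTranspose_same (CFC.sqrt ρ)
  rwa [(CFC.sqrt_nonneg ρ).posSemidef.isHermitian.eq] at h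

/-- The fidelity `F(ρ, σ) = tr √(√ρ * σ * √ρ)` of two positive semidefinite matrices. -/
def fidelity {B : Type*} [Fintype B] [DecidableEq B] {ρ σ : Matrix B B ℂ}
    (hρ : ρ.PosSemidef) (hσ : σ.PosSemidef) : ℝ :=
  ((CFC.sqrt (CFC.sqrt ρ * σ * CFC.sqrt ρ)).trace).re

/-!
Write `R = √ρ`, `S = √σ` and `T = √(R σ R)`, so that `(S R)ᴴ (S R) = T²`. A polar decomposition of
`S R` gives `W` with `Wᴴ S R = T` and `Q = W Wᴴ` a projection. For the Frobenius inner product,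
`⟪S W, R⟫ = tr T = 1`, `‖R‖² = tr ρ = 1` and `‖S W‖² + ‖(1 - Q) S‖² = tr σ = 1`, so
`‖S W - R‖² + ‖(1 - Q) S‖² = 0`. Hence `R = S W` and `S = Q S`, and `ρ = R Rᴴ = S Q S = σ`.
-/

namespace Matrix

variable {n 𝕜 : Type*} [Fintype n] [RCLike 𝕜]

theorem eq_and_eq_zero_of_trace_conjTranspose_mul {X R Z : Matrix n n 𝕜}
    (hXR : (Xᴴ * R).trace = 1) (hR : (Rᴴ * R).trace = 1)
    (hXZ : (Xᴴ * X).trace + (Zᴴ * Z).trace = 1) : X = R ∧ Z = 0 := by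
  have hRX : (Rᴴ * X).trace = 1 := by
    rw [← conjTranspose_conjTranspose X, ← conjTranspose_mul, trace_conjTranspose, hXR, star_one]
  have hsum : ((X - R)ᴴ * (X - R)).trace + (Zᴴ * Z).trace = 0 := by
    simp only [conjTranspose_sub, sub_mul, mul_sub, trace_sub, hXR, hRX, hR]
    linear_combination hXZ
  obtain ⟨hXR0, hZ0⟩ := (add_eq_zero_iff_of_nonneg (posSemidef_conjTranspose_mul_self _).trace_nonneg
    (posSemidef_conjTranspose_mul_self _).trace_nonneg).mp hsum
  exact ⟨sub_eq_zero.mp (trace_conjTranspose_mul_self_eq_zero_iff.mp hXR0),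
    trace_conjTranspose_mul_self_eq_zero_iff.mp hZ0⟩

variable [DecidableEq n]

theorem mul_conjTranspose_self_eq_mul_self_of_trace_eq_one {R S W : Matrix n n 𝕜}
    (hS : S.IsHermitian) (hW : IsStarProjection (W * Wᴴ)) (hWSR : (Wᴴ * S * R).trace = 1)
    (hR : (R * Rᴴ).trace = 1) (hS1 : (S * S).trace = 1) : R * Rᴴ = S * S := by
  set Q := W * Wᴴ
  have hQc : (1 - Q).IsHermitian := hW.one_sub.isSelfAdjoint
  have hSWR : ((S * W)ᴴ * R).trace = 1 := by rwa [conjTranspose_mul, hS.eq]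
  have hRR : (Rᴴ * R).trace = 1 := by rwa [trace_mul_comm]
  have hSW : (S * W)ᴴ * (S * W) = Wᴴ * (S * S) * W := by
    simp only [conjTranspose_mul, hS.eq, mul_assoc]
  have hcompl : ((1 - Q) * S)ᴴ * ((1 - Q) * S) = S * S - S * Q * S := by
    rw [conjTranspose_mul, hS.eq, hQc.eq, mul_assoc, ← mul_assoc (1 - Q),
      hW.one_sub.isIdempotentElem.eq]
    simp only [sub_mul, one_mul, mul_sub, mul_assoc]
  have hsplit : ((S * W)ᴴ * (S * W)).trace + (((1 - Q) * S)ᴴ * ((1 - Q) * S)).trace = 1 := by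
    rw [hSW, hcompl, trace_sub, hS1, trace_mul_cycle, ← mul_assoc, trace_mul_cycle]
    exact add_sub_cancel _ _
  obtain ⟨hSW_eq, hcompl0⟩ := eq_and_eq_zero_of_trace_conjTranspose_mul hSWR hRR hsplit
  have hQS : Q * S = S := by rwa [sub_mul, one_mul, sub_eq_zero, eq_comm] at hcompl0
  calc R * Rᴴ = S * (Q * S) := by rw [← hSW_eq, conjTranspose_mul, hS.eq]; simp only [Q, mul_assoc]
    _ = S * S := by rw [hQS]

theorem exists_isStarProjection_mul_conjTranspose_and_conjTranspose_mul_eq {N T : Matrix n n 𝕜}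
    (hT : T.IsHermitian) (hNT : Nᴴ * N = T * T) :
    ∃ W : Matrix n n 𝕜, IsStarProjection (W * Wᴴ) ∧ Wᴴ * N = T := by
  have hcont (f : ℝ → ℝ) : ContinuousOn f (spectrum ℝ T) := T.finite_real_spectrum.continuousOn f
  have hmul (f g : ℝ → ℝ) : cfc f T * cfc g T = cfc (fun x ↦ f x * g x) T :=
    (cfc_mul f g T (hcont f) (hcont g)).symm
  have hid : cfc (fun x : ℝ ↦ x) T = T := cfc_id' ℝ T
  -- the real function `x ↦ x⁻¹`, with `0⁻¹ = 0`, turns `T` into its Moore–Penrose pseudo-inverse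
  have hG : (cfc (·⁻¹ : ℝ → ℝ) T).IsHermitian := cfc_predicate _ T
  have hGTT : cfc (·⁻¹ : ℝ → ℝ) T * T * T = T := by
    have h : cfc (fun x : ℝ ↦ x⁻¹ * x * x) T = T := (cfc_congr fun x _ ↦ inv_mul_mul_self x).trans hid
    rwa [← hmul, ← hmul, hid] at h
  have hGTG : cfc (·⁻¹ : ℝ → ℝ) T * T * cfc (·⁻¹ : ℝ → ℝ) T = cfc (·⁻¹ : ℝ → ℝ) T := by
    have h : cfc (fun x : ℝ ↦ x⁻¹ * x * x⁻¹) T = cfc (·⁻¹ : ℝ → ℝ) T :=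
      cfc_congr fun x _ ↦ by simpa using mul_inv_mul_cancel x⁻¹
    rwa [← hmul, ← hmul, hid] at h
  set G := cfc (·⁻¹ : ℝ → ℝ) T
  refine ⟨N * G, ⟨?_, .mul_star_self _⟩, ?_⟩
  · calc N * G * (N * G)ᴴ * (N * G * (N * G)ᴴ) = N * G * (G * (Nᴴ * N) * G) * G * Nᴴ := by
          simp only [conjTranspose_mul, hG.eq, mul_assoc]
      _ = N * (G * T * G) * G * Nᴴ := by
          rw [hNT, ← mul_assoc G T T, hGTT]
          simp only [mul_assoc]
      _ = N * G * (N * G)ᴴ := by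
          rw [hGTG, conjTranspose_mul, hG.eq, mul_assoc]
  · rw [conjTranspose_mul, hG.eq, mul_assoc, hNT, ← mul_assoc, hGTT]

end Matrix

/-- Fidelity equal to one forces the two density matrices to coincide. -/
theorem fidelity_eq_one_iff_eq
    {B : Type*} [Fintype B] [DecidableEq B]
    {ρ σ : Matrix B B ℂ} (hρ : ρ.PosSemidef) (hσ : σ.PosSemidef)
    (htρ : ρ.trace = 1) (htσ : σ.trace = 1)
    (hF : fidelity hρ hσ = 1) : ρ = σ := by
  set R := CFC.sqrt ρ
  set S := CFC.sqrt σ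
  set T := CFC.sqrt (R * σ * R)
  have hR : R.IsHermitian := (CFC.sqrt_nonneg ρ).posSemidef.isHermitian
  have hS : S.IsHermitian := (CFC.sqrt_nonneg σ).posSemidef.isHermitian
  have hT : T.PosSemidef := (CFC.sqrt_nonneg _).posSemidef
  have hRR : R * R = ρ := CFC.sqrt_mul_sqrt_self ρ hρ.nonneg
  have hSS : S * S = σ := CFC.sqrt_mul_sqrt_self σ hσ.nonneg
  have htT : T.trace = 1 := by
    obtain ⟨-, him⟩ := Complex.nonneg_iff.mp hT.trace_nonneg
    exact Complex.ext hF him.symm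
  obtain ⟨W, hW, hWT⟩ := exists_isStarProjection_mul_conjTranspose_and_conjTranspose_mul_eq
    (N := S * R) hT.isHermitian (by
      rw [conjTranspose_mul, hR.eq, hS.eq, mul_assoc, ← mul_assoc S, hSS, ← mul_assoc,
        CFC.sqrt_mul_sqrt_self _ (sqrt_mul_mul_sqrt_posSemidef hρ hσ).nonneg])
  have h := mul_conjTranspose_self_eq_mul_self_of_trace_eq_one hS hW
    (by rw [mul_assoc, hWT, htT]) (by rwa [hR.eq, hRR]) (by rwa [hSS])
  rwa [hR.eq, hRR, hSS] at h
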